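/- Let 0 ≤ b₁ < d₁ ≤ b₂ < d₂, φ(x) := exp(−x²/2), m̂₁ := ∫_{b₁}^{d₁} φ(x) dx and m̂₂ := ∫_{b₂}^{d₂} φ(x) dx. Then ∫_{b₁}^{d₁} φ(z) ( ∫_0^{z + d₂} ( ∫_{max(b₂, y − z)}^{d₂} φ(x) dx ) dy ) dz = m̂₁ ( φ(b₂) − φ(d₂) ) + m̂₂ ( φ(b₁) − φ(d₁) ). -/

import Mathlib

open MeasureTheory Real

/-- `φ(x) = exp(−x²/2)`. -/
noncomputable def phi (x : ℝ) : ℝ := Real.exp (-(x ^ 2 / 2))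

/-!
Swapping the order of integration, the region `0 ≤ y ≤ z + d₂`, `max(b₂, y − z) ≤ x ≤ d₂` is
`b₂ ≤ x ≤ d₂`, `0 ≤ y ≤ x + z` (this needs `z + b₂ ≥ 0`), so the inner double integral is
`∫_{b₂}^{d₂} (x + z) φ(x) dx = φ(b₂) − φ(d₂) + z m̂₂`, because `x φ(x) = −φ'(x)`. Integrating this
against `φ(z)` over `[b₁, d₁]` uses `x φ(x) = −φ'(x)` once more.
-/

theorem continuous_phi : Continuous phi := by
  unfold phi; fun_prop

theorem hasDerivAt_phi (x : ℝ) : HasDerivAt phi (-x * phi x) x := by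
  have h : HasDerivAt (fun x : ℝ => -(x ^ 2 / 2)) (-x) x := by
    simpa using ((hasDerivAt_pow 2 x).div_const 2).fun_neg
  unfold phi
  simpa [mul_comm] using h.exp

theorem integral_mul_phi (a b : ℝ) : ∫ x in a..b, x * phi x = phi a - phi b := by
  have hderiv (x : ℝ) : HasDerivAt (fun x => -phi x) (x * phi x) x := by
    simpa using (hasDerivAt_phi x).fun_neg
  rw [intervalIntegral.integral_eq_sub_of_hasDerivAt (fun x _ => hderiv x)
    ((continuous_id.mul continuous_phi).intervalIntegrable _ _)]
  ring

section

variable {f : ℝ → ℝ}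

theorem Continuous.hasDerivAt_integral_left (hf : Continuous f) (b u : ℝ) :
    HasDerivAt (fun u => ∫ x in u..b, f x) (-f u) u :=
  intervalIntegral.integral_hasDerivAt_left (hf.intervalIntegrable _ _)
    (hf.stronglyMeasurableAtFilter _ _) hf.continuousAt

theorem Continuous.integral_integral_left_eq (hf : Continuous f) (a b : ℝ) :
    ∫ u in a..b, ∫ x in u..b, f x = ∫ x in a..b, (x - a) * f x := by
  have hparts := intervalIntegral.integral_mul_deriv_eq_deriv_mul (a := a) (b := b)
    (u := fun x => x - a) (u' := fun _ => 1) (v := fun u => ∫ x in u..b, f x) (v' := fun x => -f x)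
    (fun x _ => (hasDerivAt_id x).sub_const a) (fun x _ => hf.hasDerivAt_integral_left b x)
    intervalIntegrable_const (hf.neg.intervalIntegrable _ _)
  simp only [intervalIntegral.integral_same, sub_self, mul_zero, zero_mul, one_mul, mul_neg,
    intervalIntegral.integral_neg] at hparts
  linarith

theorem Continuous.integral_integral_max_sub_eq (hf : Continuous f) {b d z : ℝ}
    (hzb : 0 ≤ z + b) (hbd : b ≤ d) :
    ∫ y in (0 : ℝ)..(z + d), ∫ x in (max b (y - z))..d, f x = ∫ x in b..d, (x + z) * f x := by
  have hcont : Continuous fun y => ∫ x in (max b (y - z))..d, f x :=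
    (continuous_iff_continuousAt.2 fun u => (hf.hasDerivAt_integral_left d u).continuousAt).comp
      (continuous_const.max (continuous_id.sub continuous_const))
  have hlow : ∫ y in (0 : ℝ)..(z + b), ∫ x in (max b (y - z))..d, f x
      = ∫ y in (0 : ℝ)..(z + b), ∫ x in b..d, f x := by
    refine intervalIntegral.integral_congr fun y hy => ?_
    rw [Set.uIcc_of_le hzb] at hy
    rw [max_eq_left (by linarith [hy.2])]
  have hhigh : ∫ y in (z + b)..(z + d), ∫ x in (max b (y - z))..d, f x
      = ∫ y in (z + b)..(z + d), ∫ x in (y - z)..d, f x := by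
    refine intervalIntegral.integral_congr fun y hy => ?_
    rw [Set.uIcc_of_le (by linarith)] at hy
    rw [max_eq_right (by linarith [hy.1])]
  rw [← intervalIntegral.integral_add_adjacent_intervals (b := z + b)
      (hcont.intervalIntegrable _ _) (hcont.intervalIntegrable _ _), hlow, hhigh,
    intervalIntegral.integral_comp_sub_right (fun u => ∫ x in u..d, f x), add_sub_cancel_left,
    add_sub_cancel_left, hf.integral_integral_left_eq, intervalIntegral.integral_const,
    smul_eq_mul, sub_zero, ← intervalIntegral.integral_const_mul,
    ← intervalIntegral.integral_add ((hf.const_mul _).intervalIntegrable _ _)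
      ((by fun_prop : Continuous fun x => (x - b) * f x).intervalIntegrable _ _)]
  exact intervalIntegral.integral_congr fun x _ => by ring

end

/-- the exact triple-integral identity
`∫_{b₁}^{d₁} φ(z) (∫_0^{z+d₂} (∫_{max(b₂,y−z)}^{d₂} φ(x) dx) dy) dz
   = m̂₁(φ(b₂) − φ(d₂)) + m̂₂(φ(b₁) − φ(d₁))`. -/
theorem triple_integral_identity_two_strips (b₁ d₁ b₂ d₂ : ℝ)
    (hb₁ : 0 ≤ b₁) (h₁ : b₁ < d₁) (h₁₂ : d₁ ≤ b₂) (h₂ : b₂ < d₂) :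
    (∫ z in b₁..d₁, phi z * ∫ y in (0:ℝ)..(z + d₂), ∫ x in (max b₂ (y - z))..d₂, phi x)
      = (∫ x in b₁..d₁, phi x) * (phi b₂ - phi d₂)
        + (∫ x in b₂..d₂, phi x) * (phi b₁ - phi d₁) := by
  have hint : ∀ {a b : ℝ}, IntervalIntegrable (fun x => x * phi x) volume a b :=
    (continuous_id.mul continuous_phi).intervalIntegrable _ _
  have hinner : ∀ z ∈ Set.uIcc b₁ d₁,
      phi z * ∫ y in (0:ℝ)..(z + d₂), ∫ x in (max b₂ (y - z))..d₂, phi x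
        = (phi b₂ - phi d₂) * phi z + (∫ x in b₂..d₂, phi x) * (z * phi z) := by
    intro z hz
    rw [Set.uIcc_of_le h₁.le] at hz
    rw [continuous_phi.integral_integral_max_sub_eq (z := z) (by linarith [hz.1]) h₂.le]
    simp only [add_mul]
    rw [intervalIntegral.integral_add hint ((continuous_phi.const_mul z).intervalIntegrable _ _),
      intervalIntegral.integral_const_mul, integral_mul_phi]
    ring
  rw [intervalIntegral.integral_congr hinner,
    intervalIntegral.integral_add ((continuous_phi.const_mul _).intervalIntegrable _ _)
      (hint.const_mul _),
    intervalIntegral.integral_const_mul, intervalIntegral.integral_const_mul, integral_mul_phi]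
  ring
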